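/- arXiv:2306.10454 — 2 statements merged into one kernel-verified Lean document; each statement's English description precedes it below -/
import Mathlib

section
/- If for every δ > 0 there exist ε_0 > 0 and, for each 0 < ε < ε_0, an N_0 such that φ_n(ε) ≤ nδ for all n ≥ N_0, then for all such ε, s and N ≥ N_0 one has M^s_{N,ε}(Z,Φ) ≤ M̃^{s−δ}_{N,ε}(Z,Φ) ≤ M^{s−δ}_{N,ε}(Z,Φ), and hence M_ε(Z,Φ) ≤ M̃_ε(Z,Φ) + δ ≤ M_ε(Z,Φ) + δ. -/
open Filter Set MeasureTheory Metric Topology ENNReal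

variable {X : Type*} [MetricSpace X]

/-- The Bowen ball of order `n` and radius `r` around `x`. -/
def bowenBall (T : X → X) (n : ℕ) (x : X) (r : ℝ) : Set X :=
  {y | ∀ j < n, dist (T^[j] x) (T^[j] y) < r}

/-- The neutralized Bowen ball `B_n(x, e^{-nε})`. -/
noncomputable def nBall (T : X → X) (n : ℕ) (ε : ℝ) (x : X) : Set X :=
  bowenBall T n x (Real.exp (-(n * ε)))

/-- The weight `exp[-n s + sup_{B_n(x,e^{-nε})} φ_n]` of a neutralized Bowen ball. -/
noncomputable def wSup (T : X → X) (φ : ℕ → X → ℝ) (s ε : ℝ) (n : ℕ) (x : X) : ℝ≥0∞ :=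
  ENNReal.ofReal (Real.exp (-(n : ℝ) * s + sSup ((φ n) '' nBall T n ε x)))

/-- `M^s_{N,ε}(Z,Φ)`: infimum over countable covers of `Z` by neutralized Bowen balls
of orders `≥ N`. -/
noncomputable def MN (T : X → X) (φ : ℕ → X → ℝ) (Z : Set X) (s ε : ℝ) (N : ℕ) : ℝ≥0∞ :=
  ⨅ (D : Set (X × ℕ)) (_ : D.Countable) (_ : ∀ p ∈ D, N ≤ p.2)
    (_ : Z ⊆ ⋃ p ∈ D, nBall T p.2 ε p.1),
    ∑' p : D, wSup T φ s ε p.1.2 p.1.1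

/-- `M^s_ε(Z,Φ) = lim_{N→∞} M^s_{N,ε}(Z,Φ)` (the limit of a nondecreasing sequence). -/
noncomputable def Mlim (T : X → X) (φ : ℕ → X → ℝ) (Z : Set X) (s ε : ℝ) : ℝ≥0∞ :=
  ⨆ N, MN T φ Z s ε N

/-- The critical value `M_ε(Z,Φ)`. -/
noncomputable def Mcrit (T : X → X) (φ : ℕ → X → ℝ) (Z : Set X) (ε : ℝ) : ℝ :=
  sInf {s | Mlim T φ Z s ε = 0}

/-- The non-additive neutralized Bowen topological pressure
`P^B̃_Z(T,Φ) = lim_{ε→0} M_ε(Z,Φ) = inf_{ε>0} M_ε(Z,Φ)`. -/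
noncomputable def PB (T : X → X) (φ : ℕ → X → ℝ) (Z : Set X) : ℝ :=
  sInf (Mcrit T φ Z '' Ioi 0)

/-- `M̃^s_{N,ε}(Z,Φ)`: as `M^s_{N,ε}` but with the potential evaluated at an arbitrary
chosen point `z_i` of each covering ball. -/
noncomputable def MtN (T : X → X) (φ : ℕ → X → ℝ) (Z : Set X) (s ε : ℝ) (N : ℕ) : ℝ≥0∞ :=
  ⨅ (D : Set ((X × ℕ) × X)) (_ : D.Countable)
    (_ : ∀ p ∈ D, N ≤ p.1.2 ∧ p.2 ∈ nBall T p.1.2 ε p.1.1)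
    (_ : Z ⊆ ⋃ p ∈ D, nBall T p.1.2 ε p.1.1),
    ∑' p : D, ENNReal.ofReal (Real.exp (-(p.1.1.2 : ℝ) * s + φ p.1.1.2 p.1.2))

noncomputable def Mtlim (T : X → X) (φ : ℕ → X → ℝ) (Z : Set X) (s ε : ℝ) : ℝ≥0∞ :=
  ⨆ N, MtN T φ Z s ε N

noncomputable def MtCrit (T : X → X) (φ : ℕ → X → ℝ) (Z : Set X) (ε : ℝ) : ℝ :=
  sInf {s | Mtlim T φ Z s ε = 0}

/-- `𝓜^s_{N,ε}(Z,Φ)`: as `M^s_{N,ε}` but with the potential evaluated at the centers. -/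
noncomputable def McN (T : X → X) (φ : ℕ → X → ℝ) (Z : Set X) (s ε : ℝ) (N : ℕ) : ℝ≥0∞ :=
  ⨅ (D : Set (X × ℕ)) (_ : D.Countable) (_ : ∀ p ∈ D, N ≤ p.2)
    (_ : Z ⊆ ⋃ p ∈ D, nBall T p.2 ε p.1),
    ∑' p : D, ENNReal.ofReal (Real.exp (-(p.1.2 : ℝ) * s + φ p.1.2 p.1.1))

/-- `W^s_{N,ε}(Z,Φ)`: the weighted version, over countable families of neutralized Bowen
balls with positive coefficients `c_i` such that `Σ c_i χ_{B_i} ≥ χ_Z`. -/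
noncomputable def WN (T : X → X) (φ : ℕ → X → ℝ) (Z : Set X) (s ε : ℝ) (N : ℕ) : ℝ≥0∞ :=
  ⨅ (D : Set ((X × ℕ) × ℝ)) (_ : D.Countable)
    (_ : ∀ p ∈ D, N ≤ p.1.2 ∧ 0 < p.2)
    (_ : ∀ x ∈ Z, (1 : ℝ≥0∞) ≤ ∑' p : D,
        (nBall T p.1.1.2 ε p.1.1.1).indicator (fun _ => ENNReal.ofReal p.1.2) x),
    ∑' p : D, ENNReal.ofReal p.1.2 * wSup T φ s ε p.1.1.2 p.1.1.1

noncomputable def Wlim (T : X → X) (φ : ℕ → X → ℝ) (Z : Set X) (s ε : ℝ) : ℝ≥0∞ :=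
  ⨆ N, WN T φ Z s ε N

noncomputable def Wcrit (T : X → X) (φ : ℕ → X → ℝ) (Z : Set X) (ε : ℝ) : ℝ :=
  sInf {s | Wlim T φ Z s ε = 0}

/-- The non-additive neutralized weighted Bowen topological pressure `P^W̃B_Z(T,Φ)`. -/
noncomputable def PWB (T : X → X) (φ : ℕ → X → ℝ) (Z : Set X) : ℝ :=
  sInf (Wcrit T φ Z '' Ioi 0)

/-- The distortion `φ_n(ε) = sup{|φ_n(x) - φ_n(y)| : x ∈ X, y ∈ B_n(x, e^{-nε})}`. -/
noncomputable def distortion (T : X → X) (φ : ℕ → X → ℝ) (n : ℕ) (ε : ℝ) : ℝ :=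
  sSup {r | ∃ x y, y ∈ nBall T n ε x ∧ r = |φ n x - φ n y|}

/-- The tempered distortion condition `lim_{ε→0} limsup_{n→∞} φ_n(ε)/n = 0`. -/
def Tempered (T : X → X) (φ : ℕ → X → ℝ) : Prop :=
  Tendsto (fun ε => limsup (fun n : ℕ => distortion T φ n ε / n) atTop)
    (𝓝[>] (0 : ℝ)) (𝓝 0)

section Measures

variable [MeasurableSpace X]

/-- `Λ^s_{N,ε}(μ,Φ,δ)`: infimum over countable families of neutralized Bowen balls of
orders `≥ N` whose union has `μ`-measure `> 1 - δ`. -/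
noncomputable def ΛN (T : X → X) (φ : ℕ → X → ℝ) (μ : Measure X) (s ε δ : ℝ) (N : ℕ) :
    ℝ≥0∞ :=
  ⨅ (D : Set (X × ℕ)) (_ : D.Countable) (_ : ∀ p ∈ D, N ≤ p.2)
    (_ : ENNReal.ofReal (1 - δ) < μ (⋃ p ∈ D, nBall T p.2 ε p.1)),
    ∑' p : D, wSup T φ s ε p.1.2 p.1.1

noncomputable def Λlim (T : X → X) (φ : ℕ → X → ℝ) (μ : Measure X) (s ε δ : ℝ) : ℝ≥0∞ :=
  ⨆ N, ΛN T φ μ s ε δ N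

/-- The critical value `Λ_ε(μ,Φ,δ)`. -/
noncomputable def Λcrit (T : X → X) (φ : ℕ → X → ℝ) (μ : Measure X) (ε δ : ℝ) : ℝ :=
  sInf {s | Λlim T φ μ s ε δ = 0}

/-- The neutralized Katok pressure `P^K̃_μ(T,Φ,ε) = lim_{δ→0} Λ_ε(μ,Φ,δ)`. -/
noncomputable def PK (T : X → X) (φ : ℕ → X → ℝ) (μ : Measure X) (ε : ℝ) : ℝ :=
  sSup ((fun δ => Λcrit T φ μ ε δ) '' Ioo (0 : ℝ) 1)

/-- The lower neutralized Brin–Katok local pressure at `x`. -/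
noncomputable def PBKx (T : X → X) (φ : ℕ → X → ℝ) (μ : Measure X) (ε : ℝ) (x : X) : ℝ :=
  liminf (fun n : ℕ => (-Real.log ((μ (nBall T n ε x)).toReal) + φ n x) / n) atTop

/-- The lower neutralized Brin–Katok local pressure `P̲^B̃K_μ(T,Φ,ε)`. -/
noncomputable def PBK (T : X → X) (φ : ℕ → X → ℝ) (μ : Measure X) (ε : ℝ) : ℝ :=
  ∫ x, PBKx T φ μ ε x ∂μ

/-- `sup{P̲^B̃K_μ(T,Φ,ε) : μ ∈ M(X), μ(Z) = 1}`. -/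
noncomputable def supBK (T : X → X) (φ : ℕ → X → ℝ) (Z : Set X) (ε : ℝ) : ℝ :=
  sSup {p | ∃ μ : Measure X, IsProbabilityMeasure μ ∧ μ Z = 1 ∧ p = PBK T φ μ ε}

/-- `lim_{ε→0} sup{P̲^B̃K_μ(T,Φ,ε) : μ(Z)=1}`, realized as the infimum over `ε > 0`. -/
noncomputable def limSupBK (T : X → X) (φ : ℕ → X → ℝ) (Z : Set X) : ℝ :=
  sInf (supBK T φ Z '' Ioi 0)

/-- `sup{P^K̃_μ(T,Φ,ε) : μ ∈ M(X), μ(Z) = 1}`. -/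
noncomputable def supK (T : X → X) (φ : ℕ → X → ℝ) (Z : Set X) (ε : ℝ) : ℝ :=
  sSup {p | ∃ μ : Measure X, IsProbabilityMeasure μ ∧ μ Z = 1 ∧ p = PK T φ μ ε}

/-- `lim_{ε→0} sup{P^K̃_μ(T,Φ,ε) : μ(Z)=1}`, realized as the infimum over `ε > 0`. -/
noncomputable def limSupK (T : X → X) (φ : ℕ → X → ℝ) (Z : Set X) : ℝ :=
  sInf (supK T φ Z '' Ioi 0)

end Measures


section Aux

variable {T : X → X} {φ : ℕ → X → ℝ} {Z : Set X}

lemma mem_nBall_self (T : X → X) (n : ℕ) (ε : ℝ) (x : X) : x ∈ nBall T n ε x :=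
  fun _ _ => by simp [Real.exp_pos]

lemma MN_le_MtN {s δ ε : ℝ} {N : ℕ} (C : ℕ → ℝ) (hC : ∀ n x, |φ n x| ≤ C n)
    (hdist : ∀ n, N ≤ n → distortion T φ n ε ≤ n * (δ / 2)) :
    MN T φ Z s ε N ≤ MtN T φ Z (s - δ) ε N := by
  unfold MtN
  refine le_iInf fun D => le_iInf fun hDc => le_iInf fun hD1 => le_iInf fun hD2 => ?_
  have key : ∀ q : D, wSup T φ s ε q.1.1.2 q.1.1.1 ≤
      ENNReal.ofReal (Real.exp (-(q.1.1.2 : ℝ) * (s - δ) + φ q.1.1.2 q.1.2)) := by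
    rintro ⟨⟨⟨x, n⟩, z⟩, hq⟩
    obtain ⟨hN, hz⟩ := hD1 _ hq
    have hb : BddAbove {r | ∃ a b, b ∈ nBall T n ε a ∧ r = |φ n a - φ n b|} := by
      refine ⟨2 * C n, ?_⟩
      rintro r ⟨a, b, -, rfl⟩
      calc |φ n a - φ n b| ≤ |φ n a| + |φ n b| := abs_sub _ _
        _ ≤ 2 * C n := by linarith [hC n a, hC n b]
    have hdb : ∀ a b, b ∈ nBall T n ε a → |φ n a - φ n b| ≤ n * (δ / 2) :=
      fun a b hab => le_trans (le_csSup hb ⟨a, b, hab, rfl⟩) (hdist n hN)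
    have hsup : sSup (φ n '' nBall T n ε x) ≤ φ n z + n * δ := by
      refine csSup_le ⟨φ n x, ⟨x, mem_nBall_self T n ε x, rfl⟩⟩ ?_
      rintro r ⟨y, hy, rfl⟩
      obtain ⟨h1, h2⟩ := abs_le.1 (hdb x y hy)
      obtain ⟨h3, h4⟩ := abs_le.1 (hdb x z hz)
      linarith
    simp only [wSup]
    apply ENNReal.ofReal_le_ofReal
    apply Real.exp_le_exp.2
    have hexp : -(n : ℝ) * (s - δ) = -(n : ℝ) * s + n * δ := by ring
    rw [hexp]; linarith
  have hg : Function.Surjective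
      (fun q : D => (⟨q.1.1, ⟨q.1, q.2, rfl⟩⟩ : ↥(Prod.fst '' D))) := by
    rintro ⟨y, p, hp, rfl⟩; exact ⟨⟨p, hp⟩, rfl⟩
  calc MN T φ Z s ε N ≤ ∑' p : ↥(Prod.fst '' D), wSup T φ s ε p.1.2 p.1.1 := by
        unfold MN
        refine iInf_le_of_le (Prod.fst '' D) (iInf_le_of_le (hDc.image _)
          (iInf_le_of_le ?_ (iInf_le _ ?_)))
        · rintro p ⟨q, hq, rfl⟩; exact (hD1 q hq).1
        · rwa [Set.biUnion_image]
    _ ≤ ∑' q : D, wSup T φ s ε q.1.1.2 q.1.1.1 :=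
        ENNReal.tsum_le_tsum_comp_of_surjective hg _
    _ ≤ ∑' q : D, ENNReal.ofReal (Real.exp (-(q.1.1.2 : ℝ) * (s - δ) + φ q.1.1.2 q.1.2)) :=
        ENNReal.tsum_le_tsum key

lemma MtN_le_MN {s ε : ℝ} {N : ℕ} (C : ℕ → ℝ) (hC : ∀ n x, |φ n x| ≤ C n) :
    MtN T φ Z s ε N ≤ MN T φ Z s ε N := by
  unfold MN
  refine le_iInf fun D => le_iInf fun hDc => le_iInf fun hD1 => le_iInf fun hD2 => ?_
  have key : ∀ q : D, ENNReal.ofReal (Real.exp (-(q.1.2 : ℝ) * s + φ q.1.2 q.1.1)) ≤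
      wSup T φ s ε q.1.2 q.1.1 := by
    rintro ⟨⟨x, n⟩, hq⟩
    simp only [wSup]
    apply ENNReal.ofReal_le_ofReal
    apply Real.exp_le_exp.2
    have hub : BddAbove (φ n '' nBall T n ε x) := by
      refine ⟨C n, ?_⟩
      rintro r ⟨y, -, rfl⟩
      exact (abs_le.1 (hC n y)).2
    have := le_csSup hub ⟨x, mem_nBall_self T n ε x, rfl⟩
    linarith
  have hg : Function.Surjective
      (fun q : D => (⟨(q.1, q.1.1), ⟨q.1, q.2, rfl⟩⟩ :
        ↥((fun p : X × ℕ => (p, p.1)) '' D))) := by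
    rintro ⟨y, p, hp, rfl⟩; exact ⟨⟨p, hp⟩, rfl⟩
  calc MtN T φ Z s ε N
      ≤ ∑' p : ↥((fun p : X × ℕ => (p, p.1)) '' D),
          ENNReal.ofReal (Real.exp (-(p.1.1.2 : ℝ) * s + φ p.1.1.2 p.1.2)) := by
        unfold MtN
        refine iInf_le_of_le _ (iInf_le_of_le (hDc.image _)
          (iInf_le_of_le ?_ (iInf_le _ ?_)))
        · rintro p ⟨q, hq, rfl⟩; exact ⟨hD1 q hq, mem_nBall_self T q.2 ε q.1⟩
        · rwa [Set.biUnion_image]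
    _ ≤ ∑' q : D, ENNReal.ofReal (Real.exp (-(q.1.2 : ℝ) * s + φ q.1.2 q.1.1)) :=
        ENNReal.tsum_le_tsum_comp_of_surjective hg _
    _ ≤ ∑' q : D, wSup T φ s ε q.1.2 q.1.1 := ENNReal.tsum_le_tsum key

lemma MN_mono_N {s ε : ℝ} {N N' : ℕ} (h : N ≤ N') :
    MN T φ Z s ε N ≤ MN T φ Z s ε N' := by
  unfold MN
  refine le_iInf fun D => le_iInf fun hDc => le_iInf fun hD1 => le_iInf fun hD2 => ?_
  exact iInf_le_of_le D (iInf_le_of_le hDc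
    (iInf_le_of_le (fun p hp => h.trans (hD1 p hp)) (iInf_le _ hD2)))

lemma MtN_mono_N {s ε : ℝ} {N N' : ℕ} (h : N ≤ N') :
    MtN T φ Z s ε N ≤ MtN T φ Z s ε N' := by
  unfold MtN
  refine le_iInf fun D => le_iInf fun hDc => le_iInf fun hD1 => le_iInf fun hD2 => ?_
  exact iInf_le_of_le D (iInf_le_of_le hDc
    (iInf_le_of_le (fun p hp => ⟨h.trans (hD1 p hp).1, (hD1 p hp).2⟩) (iInf_le _ hD2)))

lemma MtN_anti_s {ε : ℝ} {N : ℕ} {s s' : ℝ} (h : s ≤ s') :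
    MtN T φ Z s' ε N ≤ MtN T φ Z s ε N := by
  unfold MtN
  refine le_iInf fun D => le_iInf fun hDc => le_iInf fun hD1 => le_iInf fun hD2 => ?_
  refine iInf_le_of_le D (iInf_le_of_le hDc (iInf_le_of_le hD1 (iInf_le_of_le hD2 ?_)))
  refine ENNReal.tsum_le_tsum fun q => ?_
  apply ENNReal.ofReal_le_ofReal
  apply Real.exp_le_exp.2
  have := mul_le_mul_of_nonneg_left h (Nat.cast_nonneg (α := ℝ) q.1.1.2)
  linarith

lemma sInf_aux {A B : Set ℝ} {δ : ℝ} (hδ : 0 < δ) (hAB : A ⊆ B)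
    (hshift : ∀ t ∈ B, t + δ ∈ A) (hBup : ∀ t ∈ B, ∀ t', t ≤ t' → t' ∈ B) :
    sInf A ≤ sInf B + δ ∧ sInf B ≤ sInf A := by
  rcases B.eq_empty_or_nonempty with hB | hBne
  · have hA : A = ∅ := Set.eq_empty_of_subset_empty (hB ▸ hAB)
    simp [hA, hB, Real.sInf_empty, le_of_lt hδ]
  by_cases hBb : BddBelow B
  · obtain ⟨b, hb⟩ := hBne
    have hAne : A.Nonempty := ⟨b + δ, hshift b hb⟩
    have hAb : BddBelow A := hBb.mono hAB
    constructor
    · have h1 : sInf A - δ ≤ sInf B := by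
        refine le_csInf ⟨b, hb⟩ fun t ht => ?_
        have := csInf_le hAb (hshift t ht); linarith
      linarith
    · exact csInf_le_csInf hBb hAne hAB
  · have hBuniv : B = Set.univ := by
      ext t
      simp only [Set.mem_univ, iff_true]
      obtain ⟨t', ht', hlt⟩ := not_bddBelow_iff.1 hBb t
      exact hBup t' ht' t hlt.le
    have hAuniv : A = Set.univ := by
      ext t
      simp only [Set.mem_univ, iff_true]
      have h1 : t - δ ∈ B := hBuniv ▸ Set.mem_univ _
      simpa using hshift _ h1
    rw [hAuniv, hBuniv]
    exact ⟨by linarith, le_rfl⟩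

end Aux

/-- quantitative comparison between `M` and `M̃` under a distortion bound. -/
theorem stmt6 {X : Type*} [MetricSpace X] [CompactSpace X] (T : X → X) (hT : Continuous T)
    (φ : ℕ → X → ℝ) (hφ : ∀ n, Continuous (φ n)) (Z : Set X) (hZ : Z.Nonempty)
    (h : ∀ δ : ℝ, 0 < δ → ∃ ε₀ > (0 : ℝ), ∀ ε : ℝ, 0 < ε → ε < ε₀ →
      ∃ N₀ : ℕ, ∀ n ≥ N₀, distortion T φ n ε ≤ n * δ) :
    ∀ δ : ℝ, 0 < δ → ∃ ε₀ > (0 : ℝ), ∀ ε : ℝ, 0 < ε → ε < ε₀ →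
      (∃ N₀ : ℕ, ∀ N ≥ N₀, ∀ s : ℝ,
        MN T φ Z s ε N ≤ MtN T φ Z (s - δ) ε N ∧
        MtN T φ Z (s - δ) ε N ≤ MN T φ Z (s - δ) ε N) ∧
      Mcrit T φ Z ε ≤ MtCrit T φ Z ε + δ ∧
      MtCrit T φ Z ε + δ ≤ Mcrit T φ Z ε + δ := by
  intro δ hδ
  obtain ⟨ε₀, hε₀, hh⟩ := h (δ / 2) (by linarith)
  refine ⟨ε₀, hε₀, fun ε hε hεε₀ => ?_⟩
  obtain ⟨N₀, hN₀⟩ := hh ε hε hεε₀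
  have hCex : ∀ n : ℕ, ∃ C : ℝ, ∀ x : X, |φ n x| ≤ C := fun n => by
    obtain ⟨C, hC⟩ := isCompact_univ.exists_bound_of_continuousOn (hφ n).continuousOn
    exact ⟨C, fun x => by simpa [Real.norm_eq_abs] using hC x (Set.mem_univ x)⟩
  choose C hC using hCex
  have main : ∀ N ≥ N₀, ∀ s : ℝ,
      MN T φ Z s ε N ≤ MtN T φ Z (s - δ) ε N ∧
      MtN T φ Z (s - δ) ε N ≤ MN T φ Z (s - δ) ε N := fun N hN s =>
    ⟨MN_le_MtN C hC (fun n hn => hN₀ n (hN.trans hn)), MtN_le_MN C hC⟩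
  refine ⟨⟨N₀, main⟩, ?_⟩
  have hML : ∀ s : ℝ, Mlim T φ Z s ε ≤ Mtlim T φ Z (s - δ) ε := fun s => by
    refine iSup_le fun N => ?_
    calc MN T φ Z s ε N ≤ MN T φ Z s ε (max N N₀) := MN_mono_N (le_max_left _ _)
      _ ≤ MtN T φ Z (s - δ) ε (max N N₀) := (main _ (le_max_right _ _) s).1
      _ ≤ Mtlim T φ Z (s - δ) ε := le_iSup _ _
  have hMtL : ∀ s : ℝ, Mtlim T φ Z s ε ≤ Mlim T φ Z s ε := fun s => by
    refine iSup_le fun N => ?_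
    have h2 := (main (max N N₀) (le_max_right _ _) (s + δ)).2
    rw [add_sub_cancel_right] at h2
    calc MtN T φ Z s ε N ≤ MtN T φ Z s ε (max N N₀) := MtN_mono_N (le_max_left _ _)
      _ ≤ MN T φ Z s ε (max N N₀) := h2
      _ ≤ Mlim T φ Z s ε := le_iSup _ _
  have haux := sInf_aux (A := {s | Mlim T φ Z s ε = 0}) (B := {s | Mtlim T φ Z s ε = 0}) hδ
    (fun s hs => le_antisymm (le_of_le_of_eq (hMtL s) hs) zero_le)
    (fun t ht => by
      have h1 := hML (t + δ)
      rw [add_sub_cancel_right] at h1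
      exact le_antisymm (le_of_le_of_eq h1 ht) zero_le)
    (fun t ht t' htt' => by
      refine le_antisymm ?_ zero_le
      calc Mtlim T φ Z t' ε ≤ Mtlim T φ Z t ε :=
            iSup_le fun N => (MtN_anti_s htt').trans (le_iSup _ N)
        _ = 0 := ht)
  constructor
  · show sInf {s | Mlim T φ Z s ε = 0} ≤ sInf {s | Mtlim T φ Z s ε = 0} + δ
    exact haux.1
  · show sInf {s | Mtlim T φ Z s ε = 0} + δ ≤ sInf {s | Mlim T φ Z s ε = 0} + δ
    linarith [haux.2]
end

section
/- Let Φ satisfy tempered distortion. For each θ > 0 there exists ε_0 > 0 such that for all 0 < ε < ε_0 there exists N_0 with: for all N ≥ N_0 and all s ∈ ℝ, 𝓜^{s+θ}_{N, ε/2}(Z,Φ) ≤ W^s_{N,ε}(Z,Φ), where 𝓜 denotes the cover quantity with weights exp[−n_i s + φ_{n_i}(x_i)] (potential evaluated at the centers). -/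
open Filter Set MeasureTheory Metric Topology ENNReal

variable {X : Type*} [MetricSpace X]

/-! Given a weighted cover `Σ cᵢ χ_{Bᵢ} ≥ χ_Z` by balls of orders `nᵢ ≥ N`, every `z ∈ Z`
receives weight at least `e^{-nθ}` from the balls of some single order `n ≥ N`, provided
`Σ_{n ≥ N} e^{-nθ} < 1`. On the set `Zₙ` of such points take a maximal `2e^{-nε}`-separated set `Yₙ` in the Bowen metric
`dₙ`: the balls of radius `2e^{-nε} ≤ e^{-nε/2}` around `Yₙ` cover `Zₙ`, and each weighted ball
contains at most one point of `Yₙ`. Hence `e^{-nθ} Σ_{y ∈ Yₙ} e^{-ns + φₙ(y)}` is bounded by the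
order-`n` part of `Σ cᵢ e^{-nᵢs + sup_{Bᵢ} φ_{nᵢ}}`, and summing over `n` gives the claim. -/

section BowenBall

variable {T : X → X} {n : ℕ}

theorem isOpen_bowenBall (hT : Continuous T) (n : ℕ) (x : X) (r : ℝ) :
    IsOpen (bowenBall T n x r) := by
  have : bowenBall T n x r = ⋂ j ∈ Finset.range n, T^[j] ⁻¹' ball (T^[j] x) r := by
    ext y
    simp [bowenBall, dist_comm]
  rw [this]
  exact isOpen_biInter_finset fun j _ => isOpen_ball.preimage (hT.iterate j)

theorem bowenBall_mono (x : X) {r r' : ℝ} (h : r ≤ r') :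
    bowenBall T n x r ⊆ bowenBall T n x r' :=
  fun _ hy j hj => (hy j hj).trans_le h

theorem mem_bowenBall_comm {x y : X} {r : ℝ} :
    y ∈ bowenBall T n x r ↔ x ∈ bowenBall T n y r := by
  simp only [bowenBall, mem_ofPred_eq, dist_comm]

theorem mem_bowenBall_self {r : ℝ} (hr : 0 < r) (x : X) : x ∈ bowenBall T n x r :=
  fun j _ => by simpa using hr

theorem mem_bowenBall_two_mul {x y z : X} {r : ℝ} (hx : x ∈ bowenBall T n z r)
    (hy : y ∈ bowenBall T n z r) : y ∈ bowenBall T n x (2 * r) := fun j hj =>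
  calc dist (T^[j] x) (T^[j] y) ≤ dist (T^[j] z) (T^[j] x) + dist (T^[j] z) (T^[j] y) :=
        dist_triangle_left _ _ _
    _ < r + r := add_lt_add (hx j hj) (hy j hj)
    _ = 2 * r := by ring

theorem exists_subset_bowenBall_subsingleton_cover (T : X → X) (n : ℕ) {r : ℝ} (hr : 0 < r)
    (A : Set X) :
    ∃ Y ⊆ A, (∀ z, (Y ∩ bowenBall T n z r).Subsingleton) ∧
      A ⊆ ⋃ y ∈ Y, bowenBall T n y (2 * r) := by
  obtain ⟨Y, ⟨hYA, hYsep⟩, hmax⟩ :=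
    zorn_subset {Y | Y ⊆ A ∧ Y.Pairwise fun a b => b ∉ bowenBall T n a (2 * r)}
      fun c hc hchain => ⟨⋃₀ c,
        ⟨sUnion_subset fun Y hY => (hc hY).1, hchain.pairwise_sUnion.2 fun Y hY => (hc hY).2⟩,
        fun _ => subset_sUnion_of_mem⟩
  refine ⟨Y, hYA, fun z y hy y' hy' => by_contra fun hne =>
    hYsep hy.1 hy'.1 hne (mem_bowenBall_two_mul hy.2 hy'.2), fun a ha => ?_⟩
  by_contra hcov
  simp only [mem_iUnion, not_exists] at hcov
  have hins : insert a Y ⊆ A ∧ (insert a Y).Pairwise fun a b => b ∉ bowenBall T n a (2 * r) :=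
    ⟨insert_subset ha hYA, pairwise_insert.2 ⟨hYsep, fun b hb _ =>
      ⟨fun h => hcov b hb (mem_bowenBall_comm.1 h), hcov b hb⟩⟩⟩
  exact hcov a (hmax hins (subset_insert a Y) (mem_insert a Y)) (mem_bowenBall_self (by linarith) a)

theorem countable_of_bowenBall_subsingleton [TopologicalSpace.SeparableSpace X]
    (hT : Continuous T) {r : ℝ} (hr : 0 < r) {Y : Set X}
    (hY : ∀ z, (Y ∩ bowenBall T n z r).Subsingleton) : Y.Countable := by
  refine PairwiseDisjoint.countable_of_isOpen (s := fun y => bowenBall T n y r)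
    (fun y hy y' hy' hne => disjoint_left.2 fun z hz hz' => hne ?_)
    (fun y _ => isOpen_bowenBall hT n y r) (fun y _ => ⟨y, mem_bowenBall_self hr y⟩)
  exact hY z ⟨hy, mem_bowenBall_comm.1 hz⟩ ⟨hy', mem_bowenBall_comm.1 hz'⟩

end BowenBall

section WeightedCount

variable {α ι : Type*}

theorem tsum_subtype_indicator_le_iSup {Y B : Set α} (h : (Y ∩ B).Subsingleton) (w : α → ℝ≥0∞) :
    ∑' y : Y, B.indicator w y ≤ ⨆ z ∈ B, w z := by
  rw [tsum_subtype, indicator_indicator, ← tsum_subtype]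
  rcases h.eq_empty_or_singleton with h | ⟨a, h⟩
  · simp [h]
  · have ha : a ∈ B := (h ▸ mem_singleton a : a ∈ Y ∩ B).2
    rw [h, tsum_singleton]
    exact le_iSup₂_of_le a ha le_rfl

theorem tsum_mul_le_tsum_mul_iSup {Y : Set α} {B : ι → Set α} {c : ι → ℝ≥0∞} {t : ℝ≥0∞}
    (hY : ∀ i, (Y ∩ B i).Subsingleton) (ht : ∀ y ∈ Y, t ≤ ∑' i, (B i).indicator (fun _ => c i) y)
    (w : α → ℝ≥0∞) :
    (∑' y : Y, w y) * t ≤ ∑' i, c i * ⨆ z ∈ B i, w z := by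
  have hswap : ∀ i y, w y * (B i).indicator (fun _ => c i) y = c i * (B i).indicator w y := by
    intro i y
    by_cases hy : y ∈ B i <;> simp [hy, mul_comm]
  calc (∑' y : Y, w y) * t = ∑' y : Y, w y * t := ENNReal.tsum_mul_right.symm
    _ ≤ ∑' y : Y, ∑' i, c i * (B i).indicator w y := ENNReal.tsum_le_tsum fun y => by
        simp_rw [← hswap, ENNReal.tsum_mul_left]
        exact mul_le_mul_right (ht y y.2) _
    _ = ∑' i, c i * ∑' y : Y, (B i).indicator w y := by
        rw [ENNReal.tsum_comm]
        simp_rw [ENNReal.tsum_mul_left]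
    _ ≤ ∑' i, c i * ⨆ z ∈ B i, w z :=
        ENNReal.tsum_le_tsum fun i => mul_le_mul_right (tsum_subtype_indicator_le_iSup (hY i) w) _

theorem ENNReal.tsum_eq_tsum_tsum_ite (g : α → ℕ) (f : α → ℝ≥0∞) :
    ∑' a, f a = ∑' n, ∑' a, if g a = n then f a else 0 := by
  rw [ENNReal.tsum_comm]
  exact tsum_congr fun a => (tsum_ite_eq' (g a) fun _ => f a).symm

theorem exists_le_of_tsum_nat_add_lt {S t : ℕ → ℝ≥0∞} {N : ℕ} (hS : ∀ n < N, S n = 0)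
    (h : ∑' k, t (k + N) < ∑' n, S n) : ∃ n ≥ N, t n ≤ S n := by
  by_contra! hlt
  have hshift : ∑' n, S n = ∑' k, S (k + N) := by
    rw [← ENNReal.summable.sum_add_tsum_nat_add' (k := N),
      Finset.sum_eq_zero fun n hn => hS n (Finset.mem_range.1 hn), zero_add]
  exact h.not_ge (hshift ▸ ENNReal.tsum_le_tsum fun k => (hlt (k + N) (Nat.le_add_left N k)).le)

theorem ENNReal.tsum_pow_nat_add (q : ℝ≥0∞) (N : ℕ) : ∑' k, q ^ (k + N) = q ^ N * (1 - q)⁻¹ := by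
  simp_rw [pow_add, ENNReal.tsum_mul_right, ENNReal.tsum_geometric, mul_comm]

theorem eventually_tsum_pow_nat_add_lt_one {q : ℝ≥0∞} (hq : q < 1) :
    ∀ᶠ N in atTop, ∑' k, q ^ (k + N) < 1 := by
  simp_rw [ENNReal.tsum_pow_nat_add]
  have : Tendsto (fun N => q ^ N * (1 - q)⁻¹) atTop (𝓝 0) := by
    simpa using ENNReal.Tendsto.mul_const (ENNReal.tendsto_pow_atTop_nhds_zero_of_lt_one hq)
      (Or.inr (ENNReal.inv_ne_top.2 (tsub_pos_of_lt hq).ne'))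
  exact this.eventually_lt_const zero_lt_one

end WeightedCount

theorem eventually_two_mul_exp_le {ε : ℝ} (hε : 0 < ε) :
    ∀ᶠ n : ℕ in atTop, 2 * Real.exp (-(n * ε)) ≤ Real.exp (-(n * (ε / 2))) := by
  have h : Tendsto (fun n : ℕ => Real.exp (n * (ε / 2))) atTop atTop :=
    Real.tendsto_exp_atTop.comp (tendsto_natCast_atTop_atTop.atTop_mul_const (by positivity))
  filter_upwards [h.eventually_ge_atTop 2] with n hn
  calc 2 * Real.exp (-(n * ε)) ≤ Real.exp (n * (ε / 2)) * Real.exp (-(n * ε)) := by gcongr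
    _ = Real.exp (-(n * (ε / 2))) := by rw [← Real.exp_add]; ring_nf

section Covers

variable {T : X → X} {φ : ℕ → X → ℝ} {Z : Set X} {s ε : ℝ} {N : ℕ}

noncomputable def wCenter {α : Type*} (φ : ℕ → α → ℝ) (s : ℝ) (n : ℕ) (x : α) : ℝ≥0∞ :=
  ENNReal.ofReal (Real.exp (-(n : ℝ) * s + φ n x))

theorem wCenter_add {α : Type*} (φ : ℕ → α → ℝ) (s θ : ℝ) (n : ℕ) (x : α) :
    wCenter φ (s + θ) n x = ENNReal.ofReal (Real.exp (-θ)) ^ n * wCenter φ s n x := by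
  rw [wCenter, wCenter, ← ENNReal.ofReal_pow (Real.exp_pos _).le,
    ← ENNReal.ofReal_mul (by positivity), ← Real.exp_nat_mul, ← Real.exp_add]
  congr 2
  ring

theorem iSup_wCenter_le_wSup [CompactSpace X] {n : ℕ} (hφ : Continuous (φ n)) (x : X) :
    ⨆ z ∈ nBall T n ε x, wCenter φ s n z ≤ wSup T φ s ε n x :=
  iSup₂_le fun _ hz => ENNReal.ofReal_le_ofReal <| Real.exp_le_exp.2 <| add_le_add_right
    (le_csSup ((isCompact_range hφ).bddAbove.mono (image_subset_range _ _))
      (mem_image_of_mem _ hz)) _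

theorem McN_le_tsum_tsum_wCenter {Y : ℕ → Set X} (hYc : ∀ n, (Y n).Countable)
    (hYN : ∀ n, ∀ y ∈ Y n, N ≤ n) (hcov : Z ⊆ ⋃ n, ⋃ y ∈ Y n, nBall T n ε y) :
    McN T φ Z s ε N ≤ ∑' n, ∑' y : Y n, wCenter φ s n y := by
  set D := ⋃ n, (fun y => (y, n)) '' Y n
  have hDc : D.Countable := countable_iUnion fun n => (hYc n).image _
  have hDN : ∀ p ∈ D, N ≤ p.2 := by
    simp only [D, mem_iUnion, mem_image]
    rintro _ ⟨n, y, hy, rfl⟩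
    exact hYN n y hy
  have hDcov : Z ⊆ ⋃ p ∈ D, nBall T p.2 ε p.1 := by
    refine hcov.trans (iUnion_subset fun n => iUnion₂_subset fun y hy => ?_)
    exact subset_biUnion_of_mem (u := fun p : X × ℕ => nBall T p.2 ε p.1)
      (show (y, n) ∈ D from mem_iUnion.2 ⟨n, mem_image_of_mem _ hy⟩)
  calc McN T φ Z s ε N ≤ ∑' p : D, wCenter φ s p.1.2 p.1.1 :=
        iInf_le_of_le D <| iInf_le_of_le hDc <| iInf_le_of_le hDN <| iInf_le _ hDcov
    _ ≤ ∑' n, ∑' p : (fun y => (y, n)) '' Y n, wCenter φ s p.1.2 p.1.1 :=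
        ENNReal.tsum_iUnion_le_tsum (fun p : X × ℕ => wCenter φ s p.2 p.1) _
    _ = ∑' n, ∑' y : Y n, wCenter φ s n y := tsum_congr fun n =>
        tsum_image (fun p : X × ℕ => wCenter φ s p.2 p.1)
          (Prod.mk_left_injective n).injOn

/-- `Σ_{nᵢ = n} cᵢ χ_{Bᵢ}(z)` for a weighted family `D` with members `((xᵢ, nᵢ), cᵢ)`. -/
noncomputable def levelMass (T : X → X) (ε : ℝ) (D : Set ((X × ℕ) × ℝ)) (n : ℕ) (z : X) : ℝ≥0∞ :=
  ∑' p : D, (nBall T n ε p.1.1.1).indicator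
    (fun _ => if p.1.1.2 = n then ENNReal.ofReal p.1.2 else 0) z

theorem tsum_levelMass (T : X → X) (ε : ℝ) (D : Set ((X × ℕ) × ℝ)) (z : X) :
    ∑' n, levelMass T ε D n z =
      ∑' p : D, (nBall T p.1.1.2 ε p.1.1.1).indicator (fun _ => ENNReal.ofReal p.1.2) z := by
  rw [ENNReal.tsum_eq_tsum_tsum_ite (fun p : D => p.1.1.2)]
  unfold levelMass
  refine tsum_congr fun n => tsum_congr fun p => ?_
  split_ifs with h
  · subst h; rfl
  · simp

theorem levelMass_eq_zero {D : Set ((X × ℕ) × ℝ)} (hDN : ∀ p ∈ D, N ≤ p.1.2) {n : ℕ}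
    (hn : n < N) (z : X) : levelMass T ε D n z = 0 := by
  refine ENNReal.tsum_eq_zero.2 fun p => ?_
  rw [if_neg (by have := hDN p.1 p.2; omega)]
  simp

theorem exists_countable_bowenBall_cover_tsum_mul_le [TopologicalSpace.SeparableSpace X]
    (hT : Continuous T) (n : ℕ) (ε : ℝ) {ι : Type*} (x : ι → X) (c : ι → ℝ≥0∞) {A : Set X}
    {t : ℝ≥0∞} (hA : ∀ z ∈ A, t ≤ ∑' i, (nBall T n ε (x i)).indicator (fun _ => c i) z)
    (w : X → ℝ≥0∞) :
    ∃ Y ⊆ A, Y.Countable ∧ A ⊆ ⋃ y ∈ Y, bowenBall T n y (2 * Real.exp (-(n * ε))) ∧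
      (∑' y : Y, w y) * t ≤ ∑' i, c i * ⨆ z ∈ nBall T n ε (x i), w z := by
  obtain ⟨Y, hYA, hY, hcov⟩ :=
    exists_subset_bowenBall_subsingleton_cover T n (Real.exp_pos (-(n * ε))) A
  exact ⟨Y, hYA, countable_of_bowenBall_subsingleton hT (Real.exp_pos _) hY, hcov,
    tsum_mul_le_tsum_mul_iSup (fun i => hY (x i)) (fun y hy => hA y (hYA hy)) w⟩

theorem McN_add_le_tsum_of_weighted_cover [CompactSpace X] (hT : Continuous T)
    (hφ : ∀ n, Continuous (φ n)) {θ : ℝ}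
    (hrad : ∀ n ≥ N, 2 * Real.exp (-(n * ε)) ≤ Real.exp (-(n * (ε / 2))))
    (htail : ∑' k, ENNReal.ofReal (Real.exp (-θ)) ^ (k + N) < 1)
    {D : Set ((X × ℕ) × ℝ)} (hDN : ∀ p ∈ D, N ≤ p.1.2)
    (hDcov : ∀ x ∈ Z, (1 : ℝ≥0∞) ≤ ∑' p : D,
      (nBall T p.1.1.2 ε p.1.1.1).indicator (fun _ => ENNReal.ofReal p.1.2) x) :
    McN T φ Z (s + θ) (ε / 2) N ≤
      ∑' p : D, ENNReal.ofReal p.1.2 * wSup T φ s ε p.1.1.2 p.1.1.1 := by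
  set q := ENNReal.ofReal (Real.exp (-θ))
  set A : ℕ → Set X := fun n => {z ∈ Z | N ≤ n ∧ q ^ n ≤ levelMass T ε D n z}
  have hZA : Z ⊆ ⋃ n, A n := fun z hz => by
    obtain ⟨n, hn, hle⟩ := exists_le_of_tsum_nat_add_lt (fun n hn => levelMass_eq_zero hDN hn z)
      (htail.trans_le ((tsum_levelMass T ε D z).symm ▸ hDcov z hz))
    exact mem_iUnion.2 ⟨n, hz, hn, hle⟩
  choose Y hYA hYc hYcov hYsum using fun n =>
    exists_countable_bowenBall_cover_tsum_mul_le hT n ε (fun p : D => p.1.1.1)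
      (fun p => if p.1.1.2 = n then ENNReal.ofReal p.1.2 else 0) (A := A n) (t := q ^ n)
      (fun z hz => hz.2.2) (wCenter φ s n)
  have hcov : Z ⊆ ⋃ n, ⋃ y ∈ Y n, nBall T n (ε / 2) y := by
    refine hZA.trans (iUnion_mono fun n z hz => ?_)
    obtain ⟨y, hy, hzy⟩ := mem_iUnion₂.1 (hYcov n hz)
    exact mem_iUnion₂.2 ⟨y, hy, bowenBall_mono y (hrad n (hYA n hy).2.1) hzy⟩
  calc McN T φ Z (s + θ) (ε / 2) N ≤ ∑' n, ∑' y : Y n, wCenter φ (s + θ) n y :=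
        McN_le_tsum_tsum_wCenter hYc (fun n y hy => (hYA n hy).2.1) hcov
    _ = ∑' n, (∑' y : Y n, wCenter φ s n y) * q ^ n := by
        simp_rw [wCenter_add, ENNReal.tsum_mul_left]
        exact tsum_congr fun n => mul_comm _ _
    _ ≤ ∑' n, ∑' p : D, (if p.1.1.2 = n then ENNReal.ofReal p.1.2 else 0) *
          ⨆ z ∈ nBall T n ε p.1.1.1, wCenter φ s n z := ENNReal.tsum_le_tsum hYsum
    _ ≤ ∑' n, ∑' p : D,
          if p.1.1.2 = n then ENNReal.ofReal p.1.2 * wSup T φ s ε p.1.1.2 p.1.1.1 else 0 := by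
        refine ENNReal.tsum_le_tsum fun n => ENNReal.tsum_le_tsum fun p => ?_
        split_ifs with h
        · subst h
          exact mul_le_mul_right (iSup_wCenter_le_wSup (hφ _) _) _
        · simp
    _ = _ := (ENNReal.tsum_eq_tsum_tsum_ite _ _).symm

end Covers

theorem stmt8_general {X : Type*} [MetricSpace X] [CompactSpace X] (T : X → X) (hT : Continuous T)
    (φ : ℕ → X → ℝ) (hφ : ∀ n, Continuous (φ n)) (Z : Set X) :
    ∀ θ : ℝ, 0 < θ → ∃ ε₀ > (0 : ℝ), ∀ ε : ℝ, 0 < ε → ε < ε₀ →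
      ∃ N₀ : ℕ, ∀ N ≥ N₀, ∀ s : ℝ,
        McN T φ Z (s + θ) (ε / 2) N ≤ WN T φ Z s ε N := by
  intro θ hθ
  refine ⟨1, one_pos, fun ε hε _ => ?_⟩
  have hq : ENNReal.ofReal (Real.exp (-θ)) < 1 :=
    ENNReal.ofReal_lt_one.2 (Real.exp_lt_one_iff.2 (neg_lt_zero.2 hθ))
  obtain ⟨N₁, hN₁⟩ := eventually_atTop.1 (eventually_two_mul_exp_le hε)
  obtain ⟨N₂, hN₂⟩ := eventually_atTop.1 (eventually_tsum_pow_nat_add_lt_one hq)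
  refine ⟨max N₁ N₂, fun N hN s => ?_⟩
  refine le_iInf fun D => le_iInf fun _ => le_iInf fun hD => le_iInf fun hDcov => ?_
  exact McN_add_le_tsum_of_weighted_cover hT hφ
    (fun n hn => hN₁ n ((le_max_left _ _).trans (hN.trans hn)))
    (hN₂ N ((le_max_right _ _).trans hN)) (fun p hp => (hD p hp).1) hDcov

/-- under tempered distortion, `𝓜^{s+θ}_{N,ε/2}(Z,Φ) ≤ W^s_{N,ε}(Z,Φ)`. -/
theorem stmt8 {X : Type*} [MetricSpace X] [CompactSpace X] (T : X → X) (hT : Continuous T)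
    (φ : ℕ → X → ℝ) (hφ : ∀ n, Continuous (φ n)) (Z : Set X) (hZ : Z.Nonempty)
    (htemp : Tempered T φ) :
    ∀ θ : ℝ, 0 < θ → ∃ ε₀ > (0 : ℝ), ∀ ε : ℝ, 0 < ε → ε < ε₀ →
      ∃ N₀ : ℕ, ∀ N ≥ N₀, ∀ s : ℝ,
        McN T φ Z (s + θ) (ε / 2) N ≤ WN T φ Z s ε N :=
  stmt8_general T hT φ hφ Z
end
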